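/- Let 0 ≤ k ≤ n and let E_k denote the k-th elementary symmetric polynomial in n variables. For every subset I ⊆ {1,…,n}, the multiplicity of 0 as a root of the univariate polynomial λ ↦ E_k(χ_I + λ𝟙) equals max(0, k − |I|); equivalently, k − mult₀(λ ↦ E_k(χ_I + λ𝟙)) = min(k, |I|). (Thus the polymatroid associated to E_k with respect to e = 𝟙 is exactly the uniform matroid U_{k,n}.) -/

import Mathlib

/-!
A `k`-subset `s` contributes `λ^{|s \ I|} (λ + 1)^{|s ∩ I|}` to `E_k(χ_I + λ𝟙)`, and
`|s \ I| ≥ k - |I|`. So `λ^{k - |I|}` divides the polynomial, and after dividing it out the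
value at `0` counts the `k`-subsets meeting `I` in `min(k, |I|)` elements; for `k ≤ n` there is
at least one, so the multiplicity is exactly `k - |I|`.
-/

open Polynomial Finset

theorem prod_C_indicator_add_X {R ι : Type*} [CommSemiring R] [DecidableEq ι]
    (s I : Finset ι) :
    ∏ i ∈ s, (C (if i ∈ I then (1 : R) else 0) + X) = X ^ #(s \ I) * (X + 1) ^ #(s ∩ I) := by
  have h : ∀ i, C (if i ∈ I then (1 : R) else 0) + X = if i ∈ I then X + 1 else X := by
    intro i; split_ifs <;> simp [add_comm]
  simp only [h, prod_ite, prod_const, filter_mem_eq_inter, filter_notMem_eq_sdiff]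
  ring

theorem Finset.exists_card_eq_card_inter_eq_min {α : Type*} [Fintype α] [DecidableEq α]
    (I : Finset α) {k : ℕ} (hk : k ≤ Fintype.card α) :
    ∃ s : Finset α, #s = k ∧ #(s ∩ I) = min k #I := by
  rcases le_total #I k with hIk | hkI
  · obtain ⟨s, hIs, -, hs⟩ := exists_subsuperset_card_eq (subset_univ I) hIk (by simpa)
    exact ⟨s, hs, by rw [inter_eq_right.mpr hIs, min_eq_right hIk]⟩
  · obtain ⟨s, -, hsI, hs⟩ := exists_subsuperset_card_eq (empty_subset I) (by simp) hkI
    exact ⟨s, hs, by rw [inter_eq_left.mpr hsI, hs, min_eq_left hkI]⟩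

theorem rootMultiplicity_zero_sum_X_pow_sdiff_mul_X_add_one_pow {R ι : Type*}
    [CommRing R] [CharZero R] [Fintype ι] [DecidableEq ι] (I : Finset ι) {k : ℕ}
    (hk : k ≤ Fintype.card ι) :
    rootMultiplicity 0
        (∑ s ∈ powersetCard k univ, (X : R[X]) ^ #(s \ I) * (X + 1) ^ #(s ∩ I)) = k - #I := by
  set m := k - #I
  have hm : ∀ s ∈ powersetCard k (univ : Finset ι), m ≤ #(s \ I) := by
    intro s hs
    have hsk := (mem_powersetCard.mp hs).2
    have hsplit := card_sdiff_add_card_inter s I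
    have hsI : #(s ∩ I) ≤ #I := card_le_card inter_subset_right
    omega
  set Q : R[X] := ∑ s ∈ powersetCard k univ, X ^ (#(s \ I) - m) * (X + 1) ^ #(s ∩ I)
  have hfactor : ∑ s ∈ powersetCard k univ, (X : R[X]) ^ #(s \ I) * (X + 1) ^ #(s ∩ I)
      = Q * (X - C 0) ^ m := by
    rw [C_0, sub_zero, sum_mul]
    refine sum_congr rfl fun s hs => ?_
    rw [mul_right_comm, ← pow_add, Nat.sub_add_cancel (hm s hs)]
  have hQ : Q.eval 0 ≠ 0 := by
    obtain ⟨s₀, hs₀, hs₀I⟩ := exists_card_eq_card_inter_eq_min I hk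
    simp only [Q, eval_finsetSum, eval_mul, eval_pow, eval_X, eval_add, eval_one, zero_add,
      one_pow, mul_one, zero_pow_eq, sum_boole, Nat.cast_ne_zero]
    refine card_ne_zero.mpr ⟨s₀, mem_filter.mpr ⟨mem_powersetCard.mpr ⟨subset_univ _, hs₀⟩, ?_⟩⟩
    have hsplit := card_sdiff_add_card_inter s₀ I
    omega
  rw [hfactor, rootMultiplicity_mul_X_sub_C_pow (fun h => hQ (by rw [h, eval_zero])),
    rootMultiplicity_eq_zero hQ, zero_add]

theorem stmt7 {n k : ℕ} (hkn : k ≤ n) (I : Finset (Fin n)) :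
    Polynomial.rootMultiplicity 0
        (∑ s ∈ Finset.powersetCard k (Finset.univ : Finset (Fin n)),
          ∏ i ∈ s, (Polynomial.C (if i ∈ I then (1 : ℝ) else 0) + Polynomial.X))
      = k - I.card ∧
    k - Polynomial.rootMultiplicity 0
        (∑ s ∈ Finset.powersetCard k (Finset.univ : Finset (Fin n)),
          ∏ i ∈ s, (Polynomial.C (if i ∈ I then (1 : ℝ) else 0) + Polynomial.X))
      = min k I.card := by
  have hmult := rootMultiplicity_zero_sum_X_pow_sdiff_mul_X_add_one_pow (R := ℝ) I
    (k := k) (by simpa using hkn)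
  simp only [← prod_C_indicator_add_X] at hmult
  exact ⟨hmult, by rw [hmult]; omega⟩
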